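/- arXiv:1901.07167 — 2 statements merged into one kernel-verified Lean document; each statement's English description precedes it below -/
import Mathlib

section
/- For every positive integer $M$ and real $u \in [0,1]$, $\int_0^1 (1 - u^3/6)^M\,du = \frac{1}{M^{1/3}}\int_0^{M^{1/3}} (1 - x^3/(6M))^M\,dx$, and consequently $M^{1/3}\int_0^1 (1-u^3/6)^M\,du \to 6^{1/3}\Gamma(4/3)$ as $M \to \infty$. -/
open MeasureTheory Real Filter Set

/-! Substituting `u = x / M^{1/p}` turns `M^{1/p} ∫₀¹ (1 - u^p/a)^M du` into
`∫₀^{M^{1/p}} (1 - x^p/(aM))^M dx`. On that range `0 ≤ 1 - x^p/(aM)` and `(1 - t/M)^M ≤ e^{-t}`,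
so dominated convergence with dominant `e^{-x^p/a}` gives the limit
`∫₀^∞ e^{-x^p/a} dx = a^{1/p} Γ(1/p + 1)`. -/

theorem tendsto_intervalIntegral_one_sub_div_pow {φ : ℝ → ℝ} {T : ℕ → ℝ}
    (hφ : Measurable φ) (hφ_int : IntegrableOn (fun x => exp (-φ x)) (Ioi 0))
    (hT : Tendsto T atTop atTop) (hφT : ∀ n : ℕ, ∀ x, 0 < x → x ≤ T n → φ x ≤ n) :
    Tendsto (fun n : ℕ => ∫ x in (0:ℝ)..T n, (1 - φ x / n) ^ n) atTop
      (nhds (∫ x in Ioi 0, exp (-φ x))) := by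
  set F : ℕ → ℝ → ℝ := fun n => (Ioc 0 (T n)).indicator fun x => (1 - φ x / n) ^ n
  have hF_eq : ∀ᶠ n in atTop, ∫ x in Ioi 0, F n x = ∫ x in (0:ℝ)..T n, (1 - φ x / n) ^ n := by
    filter_upwards [hT.eventually_ge_atTop 0] with n hn
    rw [integral_indicator measurableSet_Ioc, intervalIntegral.integral_of_le hn,
      Measure.restrict_restrict_of_subset Ioc_subset_Ioi_self]
  refine (tendsto_integral_of_dominated_convergence _ (fun n => ?_) hφ_int (fun n => ?_) ?_).congr'
    hF_eq
  · exact ((measurable_const.sub (hφ.div_const _)).pow_const n).aestronglyMeasurable.indicator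
      measurableSet_Ioc
  · refine ae_of_all _ fun x => ?_
    simp only [F]
    by_cases hx : x ∈ Ioc 0 (T n)
    · have hφx := hφT n x hx.1 hx.2
      have h_nonneg : 0 ≤ 1 - φ x / n := by
        rcases n.eq_zero_or_pos with rfl | hn
        · simp
        · rw [sub_nonneg, div_le_one (by exact_mod_cast hn)]
          exact hφx
      rw [indicator_of_mem hx, norm_of_nonneg (pow_nonneg h_nonneg n)]
      exact one_sub_div_pow_le_exp_neg hφx
    · rw [indicator_of_notMem hx, norm_zero]
      positivity
  · filter_upwards [ae_restrict_mem measurableSet_Ioi] with x (hx : 0 < x)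
    refine (tendsto_one_add_div_pow_exp (-φ x)).congr' ?_
    filter_upwards [hT.eventually_ge_atTop x] with n hn
    simp only [F]
    rw [indicator_of_mem (mem_Ioc.mpr ⟨hx, hn⟩), neg_div, ← sub_eq_add_neg]

theorem integrableOn_exp_neg_pow_div {p : ℕ} (hp : p ≠ 0) {a : ℝ} (ha : 0 < a) :
    IntegrableOn (fun x : ℝ => exp (-(x ^ p / a))) (Ioi 0) := by
  have h := integrableOn_rpow_mul_exp_neg_mul_rpow (s := 0) (p := p) neg_one_lt_zero
    (by positivity) (inv_pos.mpr ha)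
  convert h using 2 with x
  rw [rpow_zero, one_mul, rpow_natCast, neg_mul, inv_mul_eq_div]

theorem integral_exp_neg_pow_div {p : ℕ} (hp : p ≠ 0) {a : ℝ} (ha : 0 < a) :
    ∫ x in Ioi (0:ℝ), exp (-(x ^ p / a)) = a ^ ((1:ℝ) / p) * Gamma (1 / p + 1) := by
  have h := integral_exp_neg_mul_rpow (p := p) (by positivity) (inv_pos.mpr ha)
  simp only [rpow_natCast, neg_mul, inv_mul_eq_div] at h
  rw [h, inv_rpow ha.le, ← rpow_neg ha.le, neg_div, neg_neg]

theorem integral_one_sub_pow_div_eq_rescaled {p M : ℕ} (hp : p ≠ 0) (hM : M ≠ 0) (a : ℝ) :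
    ∫ u in (0:ℝ)..1, (1 - u ^ p / a) ^ M =
      1 / (M:ℝ) ^ ((1:ℝ) / p) * ∫ x in (0:ℝ)..(M:ℝ) ^ ((1:ℝ) / p), (1 - x ^ p / (a * M)) ^ M := by
  have hcp : ((M:ℝ) ^ ((1:ℝ) / p)) ^ p = M := by
    rw [one_div, rpow_inv_natCast_pow M.cast_nonneg hp]
  set c := (M:ℝ) ^ ((1:ℝ) / p)
  have hc : 0 < c := by positivity
  have h := intervalIntegral.integral_comp_div (fun u => (1 - u ^ p / a) ^ M) (a := 0) (b := c)
    hc.ne'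
  rw [zero_div, div_self hc.ne', smul_eq_mul] at h
  have h_integrand : ∀ x, (1 - x ^ p / (a * M)) ^ M = (1 - (x / c) ^ p / a) ^ M := fun x => by
    rw [div_pow, hcp, div_div, mul_comm a]
  simp_rw [h_integrand, h, ← mul_assoc, one_div_mul_cancel hc.ne', one_mul]

theorem tendsto_intervalIntegral_one_sub_pow_div_mul_natCast {p : ℕ} (hp : p ≠ 0) {a : ℝ}
    (ha : 1 ≤ a) :
    Tendsto (fun M : ℕ => ∫ x in (0:ℝ)..(M:ℝ) ^ ((1:ℝ) / p), (1 - x ^ p / (a * M)) ^ M) atTop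
      (nhds (a ^ ((1:ℝ) / p) * Gamma (1 / p + 1))) := by
  have hp' : (0:ℝ) < 1 / p := by positivity
  rw [← integral_exp_neg_pow_div hp (by linarith)]
  simp_rw [← div_div]
  refine tendsto_intervalIntegral_one_sub_div_pow (by fun_prop)
    (integrableOn_exp_neg_pow_div hp (by linarith))
    ((tendsto_rpow_atTop hp').comp tendsto_natCast_atTop_atTop) fun n x hx hxT => ?_
  calc x ^ p / a ≤ x ^ p := div_le_self (by positivity) ha
    _ ≤ ((n:ℝ) ^ ((1:ℝ) / p)) ^ p := by gcongr
    _ = n := by rw [one_div, rpow_inv_natCast_pow n.cast_nonneg hp]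

theorem tendsto_rpow_mul_integral_one_sub_pow_div {p : ℕ} (hp : p ≠ 0) {a : ℝ} (ha : 1 ≤ a) :
    Tendsto (fun M : ℕ => (M:ℝ) ^ ((1:ℝ) / p) * ∫ u in (0:ℝ)..1, (1 - u ^ p / a) ^ M) atTop
      (nhds (a ^ ((1:ℝ) / p) * Gamma (1 / p + 1))) := by
  refine (tendsto_intervalIntegral_one_sub_pow_div_mul_natCast hp ha).congr' ?_
  filter_upwards [eventually_ne_atTop 0] with M hM
  have hc : (0:ℝ) < (M:ℝ) ^ ((1:ℝ) / p) := by positivity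
  rw [integral_one_sub_pow_div_eq_rescaled hp hM, ← mul_assoc, mul_one_div_cancel hc.ne', one_mul]

theorem stmt_5 :
    (∀ M : ℕ, 0 < M →
      ∫ u in (0:ℝ)..1, (1 - u ^ 3 / 6) ^ M =
        (1 / (M:ℝ) ^ ((1:ℝ)/3)) *
          ∫ x in (0:ℝ)..((M:ℝ) ^ ((1:ℝ)/3)), (1 - x ^ 3 / (6 * M)) ^ M) ∧
    Tendsto (fun M : ℕ => (M:ℝ) ^ ((1:ℝ)/3) * ∫ u in (0:ℝ)..1, (1 - u ^ 3 / 6) ^ M)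
      atTop (nhds ((6:ℝ) ^ ((1:ℝ)/3) * Real.Gamma (4/3))) := by
  refine ⟨fun M hM => ?_, ?_⟩
  · simpa only [Nat.cast_ofNat] using integral_one_sub_pow_div_eq_rescaled (p := 3)
      three_ne_zero hM.ne' 6
  · have h := tendsto_rpow_mul_integral_one_sub_pow_div (p := 3) three_ne_zero
      (a := 6) (by norm_num)
    simpa only [Nat.cast_ofNat, show (1:ℝ) / 3 + 1 = 4 / 3 by norm_num] using h
end

section
/- Let $W$ be the minimum over all pairs $(i,j) \in [n]^2$ of $a_i + b_j + c_{i,j}$, where all $a_i, b_j, c_{i,j}$ are independent uniform $[0,1]$ random variables. Then $\mathbb{E}(W) \ge c\, n^{-2/3}$ for some absolute constant $c > 0$ and all sufficiently large $n$. -/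
/-!
Put `t = n^{-2/3} / 2`. A single sum `a_i + b_j + c_{ij}` of three independent uniform
variables is below `t` only if each summand is, which has probability at most `t^3`; by the
union bound over the `n^2` pairs, `P(W < t) ≤ n^2 t^3 = 1/8`. Since `W ≥ 0`, Markov's
inequality gives `E W ≥ t · P(W ≥ t) ≥ 7t/8`.
-/

open MeasureTheory ProbabilityTheory

section UniformMarginals

variable {Ω ι : Type*} [MeasurableSpace Ω] {μ : Measure Ω}

lemma measure_lt_le_of_map_eq_uniform {Y : Ω → ℝ} (hY : Measurable Y)
    (hmap : μ.map Y = volume.restrict (Set.Icc 0 1)) (t : ℝ) :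
    μ {ω | Y ω < t} ≤ ENNReal.ofReal t := by
  change μ (Y ⁻¹' Set.Iio t) ≤ _
  rw [← Measure.map_apply hY measurableSet_Iio, hmap, Measure.restrict_apply measurableSet_Iio]
  calc volume (Set.Iio t ∩ Set.Icc 0 1) ≤ volume (Set.Ico 0 t) :=
        measure_mono fun x hx => ⟨hx.2.1, hx.1⟩
    _ = ENNReal.ofReal t := by rw [Real.volume_Ico, sub_zero]

lemma ae_mem_Icc_of_map_eq_uniform {Y : Ω → ℝ} (hY : Measurable Y)
    (hmap : μ.map Y = volume.restrict (Set.Icc 0 1)) :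
    ∀ᵐ ω ∂μ, Y ω ∈ Set.Icc (0 : ℝ) 1 :=
  ae_of_ae_map hY.aemeasurable (hmap ▸ ae_restrict_mem measurableSet_Icc)

variable {X : ι → Ω → ℝ}

lemma ProbabilityTheory.iIndepFun.measure_forall_lt_le_pow (hind : iIndepFun X μ)
    (hX : ∀ i, Measurable (X i)) (hmap : ∀ i, μ.map (X i) = volume.restrict (Set.Icc 0 1))
    (S : Finset ι) (t : ℝ) :
    μ {ω | ∀ i ∈ S, X i ω < t} ≤ ENNReal.ofReal t ^ S.card := by
  have hinter : {ω | ∀ i ∈ S, X i ω < t} = ⋂ i ∈ S, X i ⁻¹' Set.Iio t := by ext; simp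
  rw [hinter, hind.measure_inter_preimage_eq_mul S fun _ _ => measurableSet_Iio]
  exact Finset.prod_le_pow_card _ _ _ fun i _ => measure_lt_le_of_map_eq_uniform (hX i) (hmap i) t

lemma ProbabilityTheory.iIndepFun.measure_add_add_lt_le_pow_three (hind : iIndepFun X μ)
    (hX : ∀ i, Measurable (X i)) (hmap : ∀ i, μ.map (X i) = volume.restrict (Set.Icc 0 1))
    {i j k : ι} (hij : i ≠ j) (hik : i ≠ k) (hjk : j ≠ k) (t : ℝ) :
    μ {ω | X i ω + X j ω + X k ω < t} ≤ ENNReal.ofReal t ^ 3 := by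
  classical
  have hcard : ({i, j, k} : Finset ι).card = 3 :=
    Finset.card_eq_three.2 ⟨i, j, k, hij, hik, hjk, rfl⟩
  calc μ {ω | X i ω + X j ω + X k ω < t}
      ≤ μ {ω | ∀ l ∈ ({i, j, k} : Finset ι), X l ω < t} := by
        refine measure_mono_ae ?_
        filter_upwards [ae_mem_Icc_of_map_eq_uniform (hX i) (hmap i),
          ae_mem_Icc_of_map_eq_uniform (hX j) (hmap j),
          ae_mem_Icc_of_map_eq_uniform (hX k) (hmap k)] with ω hi hj hk
          (hlt : X i ω + X j ω + X k ω < t)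
        simp only [Finset.mem_insert, Finset.mem_singleton, forall_eq_or_imp, forall_eq]
        exact ⟨by linarith [hj.1, hk.1], by linarith [hi.1, hk.1], by linarith [hi.1, hj.1]⟩
    _ ≤ ENNReal.ofReal t ^ 3 := hcard ▸ hind.measure_forall_lt_le_pow hX hmap _ t

end UniformMarginals

lemma measure_iInf_lt_le_sum {Ω κ : Type*} [MeasurableSpace Ω] (μ : Measure Ω) [Fintype κ]
    [Nonempty κ] (f : κ → Ω → ℝ) (t : ℝ) :
    μ {ω | ⨅ p, f p ω < t} ≤ ∑ p, μ {ω | f p ω < t} := by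
  have hunion : {ω | ⨅ p, f p ω < t} = ⋃ p, {ω | f p ω < t} := by
    ext ω
    simp [ciInf_lt_iff (Finite.bddBelow_range _)]
  rw [hunion]
  exact measure_iUnion_fintype_le μ _

lemma mul_one_sub_le_integral_of_measure_lt_le {Ω : Type*} [MeasurableSpace Ω] {μ : Measure Ω}
    [IsProbabilityMeasure μ] {W : Ω → ℝ} (hW : Measurable W) (h0 : 0 ≤ᵐ[μ] W)
    (hint : Integrable W μ) {t δ : ℝ} (ht : 0 ≤ t) (hδ : 0 ≤ δ)
    (htail : μ {ω | W ω < t} ≤ ENNReal.ofReal δ) :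
    t * (1 - δ) ≤ ∫ ω, W ω ∂μ := by
  have hcompl : {ω | t ≤ W ω} = {ω | W ω < t}ᶜ := by ext; simp
  have hge : 1 - δ ≤ μ.real {ω | t ≤ W ω} := by
    rw [hcompl, probReal_compl_eq_one_sub (measurableSet_lt hW measurable_const)]
    linarith [ENNReal.toReal_le_of_le_ofReal hδ htail, measureReal_def μ {ω | W ω < t}]
  exact (mul_le_mul_of_nonneg_left hge ht).trans (mul_meas_ge_le_integral_of_nonneg h0 hint t)

section MinimumWeight

variable {Ω : Type*} [MeasurableSpace Ω] {μ : Measure Ω} {n : ℕ}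
  {X : Fin n ⊕ Fin n ⊕ Fin n × Fin n → Ω → ℝ}

noncomputable def minWeight (X : Fin n ⊕ Fin n ⊕ Fin n × Fin n → Ω → ℝ) (ω : Ω) :
    ℝ :=
  ⨅ p : Fin n × Fin n,
    (X (Sum.inl p.1) ω + X (Sum.inr (Sum.inl p.2)) ω + X (Sum.inr (Sum.inr p)) ω)

lemma measurable_minWeight (hX : ∀ i, Measurable (X i)) : Measurable (minWeight X) :=
  Measurable.iInf fun _ => ((hX _).add (hX _)).add (hX _)

lemma ae_minWeight_mem_Icc [NeZero n] (hX : ∀ i, Measurable (X i))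
    (hmap : ∀ i, μ.map (X i) = volume.restrict (Set.Icc 0 1)) :
    ∀ᵐ ω ∂μ, minWeight X ω ∈ Set.Icc (0 : ℝ) 3 := by
  filter_upwards [ae_all_iff.2 fun i => ae_mem_Icc_of_map_eq_uniform (hX i) (hmap i)] with ω hω
  refine ⟨le_ciInf fun p => ?_, (ciInf_le (Finite.bddBelow_range _) (0, 0)).trans ?_⟩
  · linarith [(hω (Sum.inl p.1)).1, (hω (Sum.inr (Sum.inl p.2))).1,
      (hω (Sum.inr (Sum.inr p))).1]
  · linarith [(hω (Sum.inl 0)).2, (hω (Sum.inr (Sum.inl 0))).2,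
      (hω (Sum.inr (Sum.inr (0, 0)))).2]

lemma integrable_minWeight [IsFiniteMeasure μ] [NeZero n] (hX : ∀ i, Measurable (X i))
    (hmap : ∀ i, μ.map (X i) = volume.restrict (Set.Icc 0 1)) :
    Integrable (minWeight X) μ := by
  refine .of_bound (measurable_minWeight hX).aestronglyMeasurable 3 ?_
  filter_upwards [ae_minWeight_mem_Icc hX hmap] with ω hω
  rw [Real.norm_eq_abs, abs_le]
  exact ⟨by linarith [hω.1], hω.2⟩

lemma measure_minWeight_lt_le [NeZero n] (hind : iIndepFun X μ)
    (hX : ∀ i, Measurable (X i)) (hmap : ∀ i, μ.map (X i) = volume.restrict (Set.Icc 0 1))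
    {t : ℝ} (ht : 0 ≤ t) :
    μ {ω | minWeight X ω < t} ≤ ENNReal.ofReal ((n : ℝ) ^ 2 * t ^ 3) := by
  calc μ {ω | minWeight X ω < t}
      ≤ ∑ p : Fin n × Fin n, μ {ω | X (Sum.inl p.1) ω + X (Sum.inr (Sum.inl p.2)) ω +
          X (Sum.inr (Sum.inr p)) ω < t} := measure_iInf_lt_le_sum μ _ t
    _ ≤ ∑ _p : Fin n × Fin n, ENNReal.ofReal t ^ 3 := Finset.sum_le_sum fun p _ =>
          hind.measure_add_add_lt_le_pow_three hX hmap (by simp) (by simp) (by simp) t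
    _ = ENNReal.ofReal ((n : ℝ) ^ 2 * t ^ 3) := by
          rw [Finset.sum_const, Finset.card_univ, Fintype.card_prod, Fintype.card_fin,
            nsmul_eq_mul, ENNReal.ofReal_mul (by positivity), ENNReal.ofReal_pow ht, sq,
            ← Nat.cast_mul, ENNReal.ofReal_natCast]

end MinimumWeight

lemma sq_mul_half_rpow_neg_two_thirds_cube {x : ℝ} (hx : 0 < x) :
    x ^ 2 * (x ^ (-(2 : ℝ) / 3) / 2) ^ 3 = 1 / 8 := by
  have hcube : (x ^ (-(2 : ℝ) / 3)) ^ 3 = (x ^ 2)⁻¹ := by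
    rw [← Real.rpow_natCast, ← Real.rpow_mul hx.le, ← Real.rpow_natCast x 2,
      ← Real.rpow_neg hx.le]
    norm_num
  rw [div_pow, hcube]
  field_simp
  norm_num

theorem stmt_16 :
    ∃ c : ℝ, 0 < c ∧ ∃ N : ℕ, ∀ n : ℕ, N ≤ n → 1 ≤ n →
      ∀ (Ω : Type) (_ : MeasureSpace Ω), IsProbabilityMeasure (ℙ : Measure Ω) →
      ∀ (X : (Fin n ⊕ Fin n ⊕ Fin n × Fin n) → Ω → ℝ),
        (∀ i, Measurable (X i)) →
        iIndepFun X ℙ →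
        (∀ i, Measure.map (X i) ℙ = volume.restrict (Set.Icc (0:ℝ) 1)) →
        c * (n:ℝ) ^ (-(2:ℝ)/3) ≤
          ∫ ω, (⨅ p : Fin n × Fin n,
            (X (Sum.inl p.1) ω + X (Sum.inr (Sum.inl p.2)) ω +
              X (Sum.inr (Sum.inr p)) ω)) ∂ℙ := by
  refine ⟨7 / 16, by norm_num, 0, fun n _ hn Ω _ _ X hX hind hmap => ?_⟩
  have : NeZero n := ⟨Nat.one_le_iff_ne_zero.mp hn⟩
  have hn_pos : (0 : ℝ) < n := by exact_mod_cast Nat.pos_of_neZero n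
  have ht : 0 ≤ (n : ℝ) ^ (-(2 : ℝ) / 3) / 2 := by positivity
  have htail := measure_minWeight_lt_le hind hX hmap ht
  rw [sq_mul_half_rpow_neg_two_thirds_cube hn_pos] at htail
  calc 7 / 16 * (n : ℝ) ^ (-(2 : ℝ) / 3) = (n : ℝ) ^ (-(2 : ℝ) / 3) / 2 * (1 - 1 / 8) := by
        ring
    _ ≤ ∫ ω, minWeight X ω ∂ℙ :=
        mul_one_sub_le_integral_of_measure_lt_le (measurable_minWeight hX)
          (ae_minWeight_mem_Icc hX hmap |>.mono fun _ h => h.1) (integrable_minWeight hX hmap)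
          ht (by norm_num) htail
end
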